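/- arXiv:2309.08502 — 2 statements merged into one kernel-verified Lean document; each statement's English description precedes it below -/
import Mathlib

section
/- Let f = a_0 + a_1 z + ... + a_m z^m be a polynomial with complex coefficients, let 0 < α < β be real numbers, and let j ∈ {0,...,m} satisfy |a_j| α^j > (β/α)^{m-j} Σ_{i≠j} |a_i| α^i. Then every complex zero θ of f satisfies |θ| < α or |θ| > β. -/
/-! If `α ≤ ‖θ‖ ≤ β`, write `‖θ‖ = t α` with `1 ≤ t ≤ β/α`. Each term `|a_i| ‖θ‖^i = t^i |a_i| α^i` with
`i ≤ m` is at most `t^m |a_i| α^i`, so the hypothesis makes the `j`-th term of `f(θ)` strictly larger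
in norm than the sum of all the others, and `f(θ)` cannot vanish. -/

open Finset

lemma norm_le_sum_norm_erase_of_sum_eq_zero {ι E : Type*} [SeminormedAddCommGroup E] [DecidableEq ι]
    {s : Finset ι} {f : ι → E} {j : ι} (hj : j ∈ s) (h : ∑ i ∈ s, f i = 0) :
    ‖f j‖ ≤ ∑ i ∈ s.erase j, ‖f i‖ := by
  have hfj : f j = -∑ i ∈ s.erase j, f i := eq_neg_of_add_eq_zero_left ((add_sum_erase s f hj).trans h)
  rw [hfj, norm_neg]
  exact norm_sum_le _ _

lemma sum_mul_mul_pow_le_pow_mul_sum {s : Finset ℕ} {m : ℕ} (hs : ∀ i ∈ s, i ≤ m) {c : ℕ → ℝ}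
    (hc : ∀ i ∈ s, 0 ≤ c i) {t x : ℝ} (ht : 1 ≤ t) (hx : 0 ≤ x) :
    ∑ i ∈ s, c i * (t * x) ^ i ≤ t ^ m * ∑ i ∈ s, c i * x ^ i := by
  rw [mul_sum]
  refine sum_le_sum fun i hi => ?_
  calc c i * (t * x) ^ i = t ^ i * (c i * x ^ i) := by ring
    _ ≤ t ^ m * (c i * x ^ i) := by
      gcongr
      · exact mul_nonneg (hc i hi) (pow_nonneg hx i)
      · exact hs i hi

lemma sum_mul_pow_lt_of_dominant {s : Finset ℕ} {m j : ℕ} (hs : ∀ i ∈ s, i ≤ m) (hj : j ≤ m)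
    {c : ℕ → ℝ} (hc : ∀ i ∈ s, 0 ≤ c i) {α r : ℝ} (hα : 0 < α) (hαr : α ≤ r)
    (hdom : (r / α) ^ (m - j) * ∑ i ∈ s, c i * α ^ i < c j * α ^ j) :
    ∑ i ∈ s, c i * r ^ i < c j * r ^ j := by
  set t := r / α
  have hr : r = t * α := (div_mul_cancel₀ r hα.ne').symm
  have ht : 1 ≤ t := (one_le_div hα).2 hαr
  have htj : 0 < t ^ j := pow_pos (zero_lt_one.trans_le ht) j
  calc ∑ i ∈ s, c i * r ^ i ≤ t ^ m * ∑ i ∈ s, c i * α ^ i := by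
        rw [hr]; exact sum_mul_mul_pow_le_pow_mul_sum hs hc ht hα.le
    _ = t ^ j * ((t ^ (m - j)) * ∑ i ∈ s, c i * α ^ i) := by
        rw [← mul_assoc, ← pow_add, Nat.add_sub_cancel' hj]
    _ < t ^ j * (c j * α ^ j) := mul_lt_mul_of_pos_left hdom htj
    _ = c j * r ^ j := by rw [hr, mul_pow]; ring

theorem stmt_5_general (m : ℕ) (a : ℕ → ℂ) (α β : ℝ) (hα : 0 < α)
    (j : ℕ) (hj : j ≤ m)
    (hineq : ‖a j‖ * α ^ j >
      (β / α) ^ (m - j) *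
        ∑ i ∈ (Finset.range (m + 1)).erase j, ‖a i‖ * α ^ i)
    (θ : ℂ) (hθ : ∑ i ∈ Finset.range (m + 1), a i * θ ^ i = 0) :
    ‖θ‖ < α ∨ β < ‖θ‖ := by
  by_contra! ⟨hαθ, hθβ⟩
  have hs : ∀ i ∈ (range (m + 1)).erase j, i ≤ m := fun i hi =>
    Nat.lt_succ_iff.1 (mem_range.1 (mem_of_mem_erase hi))
  have hdom : ∑ i ∈ (range (m + 1)).erase j, ‖a i‖ * ‖θ‖ ^ i < ‖a j‖ * ‖θ‖ ^ j := by
    refine sum_mul_pow_lt_of_dominant hs hj (fun i _ => norm_nonneg _) hα hαθ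
      (lt_of_le_of_lt ?_ hineq)
    gcongr
  have hle := norm_le_sum_norm_erase_of_sum_eq_zero (mem_range.2 (Nat.lt_succ_of_le hj)) hθ
  simp only [norm_mul, norm_pow] at hle
  exact hdom.not_ge hle

theorem stmt_5 (m : ℕ) (a : ℕ → ℂ) (α β : ℝ) (hα : 0 < α) (hαβ : α < β)
    (j : ℕ) (hj : j ≤ m)
    (hineq : ‖a j‖ * α ^ j >
      (β / α) ^ (m - j) *
        ∑ i ∈ (Finset.range (m + 1)).erase j, ‖a i‖ * α ^ i)
    (θ : ℂ) (hθ : ∑ i ∈ Finset.range (m + 1), a i * θ ^ i = 0) :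
    ‖θ‖ < α ∨ β < ‖θ‖ :=
  stmt_5_general m a α β hα j hj hineq θ hθ
end

section
/- Let f = a_0 + a_1 z + ... + a_m z^m ∈ ℤ[z] be primitive. Suppose there exist reals 0 < α < β and an index j ∈ {0,...,m} with |a_j| α^j > (β/α)^{m-j} Σ_{i≠j} |a_i| α^i. If there exist natural numbers n, d, k, ℓ ≤ m and a prime p ∤ d with β - d ≥ n ≥ α + d, f(n) = ± p^k d, gcd(k, ℓ) = 1, p^k | f^{(i)}(n)/i! for i = 0,...,ℓ-1, and (when k > 1) p ∤ f^{(ℓ)}(n)/ℓ!, then f is irreducible in ℤ[z]. -/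
/-!
On the annulus `α ≤ |z| ≤ β` the term `a_j z ^ j` dominates the rest of `f(z)`, so every complex
root of `f` lies off it, hence at distance more than `d` from `n`; writing a nonconstant factor `g`
of `f` as `lc(g) ∏ (X - zᵢ)` then gives `|g(n)| > d`.

If `f = g h`, the `p`-adic Newton polygon of the Taylor expansion of `f` at `n` starts with the edge
from `(0, k)` to `(ℓ, 0)`, which has no interior lattice point as `gcd(k, ℓ) = 1`. It cannot be
shared between `g` and `h`, so `p` divides at most one of `g(n)`, `h(n)` (for `k = 1` this is just
`p² ∤ f(n)`). If `p ∤ h(n)`, then `h(n) ∣ d`, so `h` is constant, and a unit since `f` is primitive.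
-/

open Polynomial Finset

theorem pow_le_pow_mul_pow_sub {R : Type*} [CommSemiring R] [PartialOrder R] [IsOrderedRing R]
    {x y : R} (hx : 1 ≤ x) (hxy : x ≤ y) {i j m : ℕ} (hi : i ≤ m) (hj : j ≤ m) :
    x ^ i ≤ x ^ j * y ^ (m - j) :=
  calc x ^ i ≤ x ^ m := pow_le_pow_right₀ hx hi
    _ = x ^ j * x ^ (m - j) := by rw [← pow_add, Nat.add_sub_cancel' hj]
    _ ≤ x ^ j * y ^ (m - j) := by have := zero_le_one.trans hx; gcongr

theorem norm_lt_or_lt_norm_of_isRoot {K : Type*} [NormedField K] {f : K[X]} {m j : ℕ} {α β : ℝ}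
    (hdeg : f.natDegree ≤ m) (hj : j ≤ m) (hα : 0 < α)
    (hdom : (β / α) ^ (m - j) * ∑ i ∈ (range (m + 1)).erase j, ‖f.coeff i‖ * α ^ i <
      ‖f.coeff j‖ * α ^ j)
    {z : K} (hz : f.IsRoot z) : ‖z‖ < α ∨ β < ‖z‖ := by
  by_contra! ⟨hαz, hzβ⟩
  have hjS : f.coeff j * z ^ j = -∑ i ∈ (range (m + 1)).erase j, f.coeff i * z ^ i := by
    rw [eq_neg_iff_add_eq_zero,
      add_sum_erase _ (fun i => f.coeff i * z ^ i) (mem_range.2 (by omega)),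
      ← eval_eq_sum_range' (by omega)]
    exact hz
  set S := (range (m + 1)).erase j
  set x := ‖z‖ / α
  have hx : 1 ≤ x := (one_le_div hα).2 hαz
  have hterm (i) (hi : i ∈ S) :
      ‖f.coeff i‖ * ‖z‖ ^ i ≤ x ^ j * ((β / α) ^ (m - j) * (‖f.coeff i‖ * α ^ i)) := by
    have him : i ≤ m := Nat.lt_succ_iff.1 (mem_range.1 (mem_of_mem_erase hi))
    have hpow := pow_le_pow_mul_pow_sub hx (div_le_div_of_nonneg_right hzβ hα.le) him hj
    calc ‖f.coeff i‖ * ‖z‖ ^ i = ‖f.coeff i‖ * α ^ i * x ^ i := by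
          rw [div_pow, mul_assoc, mul_div_cancel₀ _ (by positivity)]
      _ ≤ ‖f.coeff i‖ * α ^ i * (x ^ j * (β / α) ^ (m - j)) := by gcongr
      _ = _ := by ring
  have hxj : 0 < x ^ j := by positivity
  refine lt_irrefl (‖f.coeff j‖ * ‖z‖ ^ j) ?_
  calc ‖f.coeff j‖ * ‖z‖ ^ j = ‖∑ i ∈ S, f.coeff i * z ^ i‖ := by
        rw [← norm_pow, ← norm_mul, hjS, norm_neg]
    _ ≤ ∑ i ∈ S, ‖f.coeff i‖ * ‖z‖ ^ i := by
        simpa only [norm_mul, norm_pow] using norm_sum_le S fun i => f.coeff i * z ^ i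
    _ ≤ x ^ j * ((β / α) ^ (m - j) * ∑ i ∈ S, ‖f.coeff i‖ * α ^ i) := by
        simpa only [mul_sum] using sum_le_sum hterm
    _ < x ^ j * (‖f.coeff j‖ * α ^ j) := by gcongr
    _ = ‖f.coeff j‖ * ‖z‖ ^ j := by
        rw [div_pow, mul_comm, mul_assoc, mul_div_cancel₀ _ (by positivity)]

theorem lt_norm_sub_of_norm_lt_or_lt_norm {z : ℂ} {x α β d : ℝ} (hz : ‖z‖ < α ∨ β < ‖z‖)
    (hx : 0 ≤ x) (hα : α + d ≤ x) (hβ : x ≤ β - d) : d < ‖(x : ℂ) - z‖ := by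
  have hxn : ‖(x : ℂ)‖ = x := by rw [Complex.norm_real, Real.norm_of_nonneg hx]
  rcases hz with hz | hz
  · have := norm_sub_norm_le (x : ℂ) z
    linarith
  · have := norm_sub_norm_le z (x : ℂ)
    rw [norm_sub_rev] at this
    linarith

theorem lt_norm_eval_of_forall_mem_roots {K : Type*} [NormedField K] [IsAlgClosed K] {w : K[X]}
    (hw : 0 < w.natDegree) (hlc : 1 ≤ ‖w.leadingCoeff‖) {x : K} {d : ℝ} (hd : 1 ≤ d)
    (hroots : ∀ z ∈ w.roots, d < ‖x - z‖) : d < ‖w.eval x‖ := by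
  have hcard : Multiset.card w.roots = w.natDegree := IsAlgClosed.card_roots_eq_natDegree
  have hne : w.roots ≠ 0 := fun h => by simp [h] at hcard; omega
  have hprod : ‖(w.roots.map (x - ·)).prod‖ = (w.roots.map fun z => ‖x - z‖).prod := by
    simpa [Multiset.map_map] using map_multiset_prod (normHom : K →*₀ ℝ) (w.roots.map (x - ·))
  rw [(IsAlgClosed.splits w).eval_eq_prod_roots, norm_mul, hprod]
  calc d ≤ d ^ Multiset.card w.roots := le_self_pow₀ hd (by omega)
    _ = (w.roots.map fun _ => d).prod := by simp
    _ < (w.roots.map fun z => ‖x - z‖).prod :=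
        Multiset.prod_map_lt_prod_map hne _ _ (fun _ _ => by positivity) hroots
    _ ≤ _ := le_mul_of_one_le_left (Multiset.prod_nonneg fun _ h => by
          obtain ⟨_, _, rfl⟩ := Multiset.mem_map.1 h; positivity) hlc

theorem exists_not_dvd_coeff_of_not_dvd_coeff_mul {R : Type*} [CommSemiring R] {a : R}
    {G H : R[X]} {n : ℕ} (h : ¬ a ∣ (G * H).coeff n) :
    ∃ s t, s + t = n ∧ ¬ a ∣ G.coeff s ∧ ¬ a ∣ H.coeff t := by
  contrapose! h
  rw [coeff_mul]
  refine dvd_sum fun ⟨s, t⟩ hst => ?_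
  by_cases hs : a ∣ G.coeff s
  · exact hs.mul_right _
  · exact (h s t (mem_antidiagonal.1 hst) hs).mul_left _

theorem eq_of_le_of_le_of_mul_le_mul {a b x y : ℝ} (ha : 0 ≤ a) (hb : 0 < b) (hx : a ≤ x)
    (hy : b ≤ y) (h : x * y ≤ a * b) : x = a := by
  nlinarith

namespace Int

noncomputable def padicAbv (p : ℕ) [Fact p.Prime] : AbsoluteValue ℤ ℝ :=
  (Rat.AbsoluteValue.padic p).comp (f := Int.castRingHom ℚ) Int.cast_injective

variable {p : ℕ} [Fact p.Prime]

theorem padicAbv_apply (x : ℤ) : padicAbv p x = padicNorm p x := rfl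

theorem isNonarchimedean_padicAbv : IsNonarchimedean (padicAbv p) := fun x y => by
  simp only [padicAbv_apply, Int.cast_add]
  exact_mod_cast padicNorm.nonarchimedean (p := p) (q := x) (r := y)

theorem padicAbv_le_one (x : ℤ) : padicAbv p x ≤ 1 := by
  simpa only [padicAbv_apply, Rat.cast_one] using
    (Rat.cast_le (K := ℝ)).2 (padicNorm.of_int (p := p) x)

theorem padicAbv_eq_inv_pow {x : ℤ} (hx : x ≠ 0) :
    padicAbv p x = ((p : ℝ) ^ padicValInt p x)⁻¹ := by
  rw [padicAbv_apply, padicNorm.eq_zpow_of_nonzero (by exact_mod_cast hx), padicValRat.of_int]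
  push_cast
  rw [zpow_neg, zpow_natCast]

theorem padicAbv_le_inv_pow_of_dvd {x : ℤ} {k : ℕ} (h : (p : ℤ) ^ k ∣ x) :
    padicAbv p x ≤ ((p : ℝ) ^ k)⁻¹ := by
  rw [← Nat.cast_pow, padicNorm.dvd_iff_norm_le] at h
  rw [padicAbv_apply, ← zpow_natCast, ← zpow_neg]
  simpa only [Rat.cast_zpow, Rat.cast_natCast] using (Rat.cast_le (K := ℝ)).2 h

theorem padicAbv_eq_one_of_not_dvd {x : ℤ} (h : ¬ (p : ℤ) ∣ x) : padicAbv p x = 1 := by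
  have hx : x ≠ 0 := by rintro rfl; simp at h
  rw [padicAbv_eq_inv_pow hx, padicValInt.eq_zero_of_not_dvd h, pow_zero, inv_one]

end Int

theorem gaussNorm_padicAbv_le_of_dvd {p k ℓ : ℕ} [Fact p.Prime] {c : ℝ} (hc : 0 ≤ c)
    (hc1 : c ≤ 1) (hcℓ : c ^ ℓ = ((p : ℝ) ^ k)⁻¹) {F : ℤ[X]}
    (hdiv : ∀ i < ℓ, (p : ℤ) ^ k ∣ F.coeff i) : gaussNorm (Int.padicAbv p) c F ≤ c ^ ℓ := by
  obtain ⟨i, hi⟩ := exists_eq_gaussNorm (Int.padicAbv p) c F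
  rw [hi]
  rcases lt_or_ge i ℓ with hiℓ | hiℓ
  · calc Int.padicAbv p (F.coeff i) * c ^ i ≤ c ^ ℓ * 1 :=
          mul_le_mul (hcℓ ▸ Int.padicAbv_le_inv_pow_of_dvd (hdiv i hiℓ)) (pow_le_one₀ hc hc1)
            (by positivity) (by positivity)
      _ = c ^ ℓ := mul_one _
  · calc Int.padicAbv p (F.coeff i) * c ^ i ≤ 1 * c ^ ℓ :=
          mul_le_mul (Int.padicAbv_le_one _) (pow_le_pow_of_le_one hc hc1 hiℓ)
            (by positivity) zero_le_one
      _ = c ^ ℓ := one_mul _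

/- With `c ^ ℓ = p ^ (-k)`, the Gauss norm `‖·‖` weighted by `c` is multiplicative and
`‖G * H‖ ≤ c ^ ℓ`. Both `|G₀ H₀|ₚ` and `|G_s H_t|ₚ c ^ ℓ` (with `s + t = ℓ`, `p ∤ G_s H_t`) equal
`c ^ ℓ`, so `‖G‖ = |G₀|ₚ = c ^ s`, i.e. `ℓ vₚ(G₀) = k s`: impossible for `0 < s < ℓ` coprime to
`k`. -/
theorem not_dvd_coeff_zero_of_coprime_edge {p k ℓ : ℕ} [Fact p.Prime] (hℓ : 0 < ℓ)
    (hcop : k.Coprime ℓ) {G H : ℤ[X]} (h0 : ¬ (p : ℤ) ^ (k + 1) ∣ (G * H).coeff 0)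
    (hdiv : ∀ i < ℓ, (p : ℤ) ^ k ∣ (G * H).coeff i) (hℓ' : ¬ (p : ℤ) ∣ (G * H).coeff ℓ)
    (hG : (p : ℤ) ∣ G.coeff 0) : ¬ (p : ℤ) ∣ H.coeff 0 := by
  intro hH
  have hp : (1 : ℝ) ≤ p := by exact_mod_cast (Fact.out : p.Prime).one_lt.le
  obtain ⟨c, hc, hcℓ⟩ : ∃ c : ℝ, 0 < c ∧ c ^ ℓ = ((p : ℝ) ^ k)⁻¹ :=
    ⟨_, Real.rpow_pos_of_pos (by positivity) _, Real.rpow_inv_natCast_pow (by positivity) hℓ.ne'⟩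
  have hc1 : c ≤ 1 :=
    (pow_le_one_iff_of_nonneg hc.le hℓ.ne').1 (hcℓ ▸ inv_le_one_of_one_le₀ (one_le_pow₀ hp))
  obtain ⟨s, t, hst, hGs, hHt⟩ := exists_not_dvd_coeff_of_not_dvd_coeff_mul hℓ'
  have hs : 0 < s := Nat.pos_of_ne_zero fun h => hGs (h ▸ hG)
  have ht : 0 < t := Nat.pos_of_ne_zero fun h => hHt (h ▸ hH)
  have hF0 : (G * H).coeff 0 ≠ 0 := fun h => h0 (h ▸ dvd_zero _)
  have hG0 : G.coeff 0 ≠ 0 := fun h => hF0 (by rw [mul_coeff_zero, h, zero_mul])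
  have hH0 : H.coeff 0 ≠ 0 := fun h => hF0 (by rw [mul_coeff_zero, h, mul_zero])
  have hval0 : padicValInt p ((G * H).coeff 0) = k := by
    have h1 := (padicValInt_dvd_iff k _).1 (hdiv 0 hℓ)
    have h2 := mt (padicValInt_dvd_iff (k + 1) _).2 h0
    omega
  have hGH : gaussNorm (Int.padicAbv p) c G * gaussNorm (Int.padicAbv p) c H ≤ c ^ ℓ := by
    rw [← gaussNorm_mul Int.isNonarchimedean_padicAbv hc]
    exact gaussNorm_padicAbv_le_of_dvd hc.le hc1 hcℓ hdiv
  have hle (Q : ℤ[X]) (i : ℕ) := Q.le_gaussNorm (Int.padicAbv p) hc.le i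
  have hnormG₀ : gaussNorm (Int.padicAbv p) c G = Int.padicAbv p (G.coeff 0) := by
    refine eq_of_le_of_le_of_mul_le_mul ((Int.padicAbv p).nonneg _) ((Int.padicAbv p).pos hH0)
      (by simpa using hle G 0) (by simpa using hle H 0) ?_
    rwa [← map_mul, ← mul_coeff_zero, Int.padicAbv_eq_inv_pow hF0, hval0, ← hcℓ]
  have hnormGs : gaussNorm (Int.padicAbv p) c G = c ^ s :=
    eq_of_le_of_le_of_mul_le_mul (b := c ^ t) (by positivity) (by positivity)
      (by simpa [Int.padicAbv_eq_one_of_not_dvd hGs] using hle G s)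
      (by simpa [Int.padicAbv_eq_one_of_not_dvd hHt] using hle H t) (by rwa [← pow_add, hst])
  have hsℓ : padicValInt p (G.coeff 0) * ℓ = k * s := by
    have h : ((p : ℝ) ^ (padicValInt p (G.coeff 0) * ℓ))⁻¹ = ((p : ℝ) ^ (k * s))⁻¹ := by
      rw [pow_mul, ← inv_pow, ← Int.padicAbv_eq_inv_pow hG0, ← hnormG₀, hnormGs, ← pow_mul,
        mul_comm, pow_mul, hcℓ, inv_pow, ← pow_mul]
    exact Nat.pow_right_injective (Fact.out : p.Prime).two_le (by exact_mod_cast inv_inj.1 h)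
  have := Nat.le_of_dvd hs (hcop.symm.dvd_of_dvd_mul_left ⟨_, hsℓ.symm.trans (mul_comm _ _)⟩)
  omega

theorem not_dvd_coeff_zero_or_not_dvd_coeff_zero {p k ℓ : ℕ} [Fact p.Prime] (hcop : k.Coprime ℓ)
    {G H : ℤ[X]} (h0 : ¬ (p : ℤ) ^ (k + 1) ∣ (G * H).coeff 0)
    (hdiv : ∀ i < ℓ, (p : ℤ) ^ k ∣ (G * H).coeff i)
    (hℓ : 1 < k → ¬ (p : ℤ) ∣ (G * H).coeff ℓ) :
    ¬ (p : ℤ) ∣ G.coeff 0 ∨ ¬ (p : ℤ) ∣ H.coeff 0 := by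
  rw [or_iff_not_imp_left, not_not]
  intro hG
  rcases le_or_gt k 1 with hk | hk
  · intro hH
    refine h0 ((pow_dvd_pow _ (by omega : k + 1 ≤ 2)).trans ?_)
    rw [mul_coeff_zero, sq]
    exact mul_dvd_mul hG hH
  · have hℓ0 : 0 < ℓ := Nat.pos_of_ne_zero fun h => by
      rw [h, Nat.coprime_zero_right] at hcop
      omega
    exact not_dvd_coeff_zero_of_coprime_edge hℓ0 hcop h0 hdiv (hℓ hk) hG

theorem isUnit_of_dvd_of_eval_dvd {f b : ℤ[X]} (hprim : f.IsPrimitive) (hb : b ∣ f) {α β : ℝ}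
    (hroots : ∀ z : ℂ, aeval z f = 0 → ‖z‖ < α ∨ β < ‖z‖) {n d : ℕ} (hd : 0 < d)
    (hnα : α + d ≤ n) (hnβ : n ≤ β - d) (hbd : b.eval (n : ℤ) ∣ d) : IsUnit b := by
  suffices hdeg : b.natDegree = 0 by
    obtain ⟨c, rfl⟩ := natDegree_eq_zero.1 hdeg
    exact isUnit_C.2 (hprim c hb)
  by_contra hdeg
  have hinj : Function.Injective (algebraMap ℤ ℂ) := (algebraMap ℤ ℂ).injective_int
  have hb0 : b ≠ 0 := ne_zero_of_dvd_ne_zero hprim.ne_zero hb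
  have hdist (z) (hz : z ∈ (b.map (algebraMap ℤ ℂ)).roots) : (d : ℝ) < ‖(n : ℂ) - z‖ := by
    have hbz : aeval z b = 0 := by
      rw [← eval_map_algebraMap]
      exact (mem_roots ((Polynomial.map_ne_zero_iff hinj).2 hb0)).1 hz
    obtain ⟨q, rfl⟩ := hb
    simpa using lt_norm_sub_of_norm_lt_or_lt_norm (hroots z (by simp [hbz])) n.cast_nonneg hnα hnβ
  have hlt := lt_norm_eval_of_forall_mem_roots (x := (n : ℂ)) (d := d)
    (by rw [natDegree_map_eq_of_injective hinj]; omega)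
    (by
      rw [leadingCoeff_map_of_injective hinj, algebraMap_int_eq, eq_intCast, Complex.norm_intCast]
      exact_mod_cast Int.one_le_abs (leadingCoeff_ne_zero.2 hb0))
    (by exact_mod_cast hd) hdist
  have hle : |b.eval (n : ℤ)| ≤ d := Int.le_of_dvd (by exact_mod_cast hd) ((abs_dvd _ _).2 hbd)
  rw [eval_map_algebraMap, show (n : ℂ) = algebraMap ℤ ℂ (n : ℤ) by simp,
    aeval_algebraMap_apply_eq_algebraMap_eval, algebraMap_int_eq, eq_intCast,
    Complex.norm_intCast] at hlt
  exact absurd hle (not_le.2 (by exact_mod_cast hlt))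

open Polynomial in
theorem stmt_10_general (m : ℕ) (f : ℤ[X]) (hdeg : f.natDegree = m) (hprim : f.IsPrimitive)
    (α β : ℝ) (hα : 0 < α) (j : ℕ) (hj : j ≤ m)
    (hineq : (|f.coeff j| : ℝ) * α ^ j >
      ((β / α) ^ (m - j)) * ∑ i ∈ (Finset.range (m + 1)).erase j, (|f.coeff i| : ℝ) * α ^ i)
    (n d k ℓ : ℕ) (hd : 0 < d) (hℓ : 0 < ℓ)
    (hℓm : ℓ ≤ m) (p : ℕ) (hp : p.Prime) (hpd : ¬ p ∣ d)
    (hnα : (n : ℝ) ≥ α + d) (hnβ : (n : ℝ) ≤ β - d)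
    (hval : f.eval (n : ℤ) = (p : ℤ) ^ k * d ∨ f.eval (n : ℤ) = -((p : ℤ) ^ k * d))
    (hcop : Nat.Coprime k ℓ)
    (hdiv : ∀ i < ℓ, (p : ℤ) ^ k ∣ (Polynomial.hasseDeriv i f).eval (n : ℤ))
    (hnd : 1 < k → ¬ (p : ℤ) ∣ (Polynomial.hasseDeriv ℓ f).eval (n : ℤ)) :
    Irreducible f := by
  have := Fact.mk hp
  have hroots (z : ℂ) (hz : aeval z f = 0) : ‖z‖ < α ∨ β < ‖z‖ :=
    norm_lt_or_lt_norm_of_isRoot (f := f.map (algebraMap ℤ ℂ)) (natDegree_map_le.trans hdeg.le)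
      hj hα (by simpa [Complex.norm_intCast] using hineq) (by rwa [IsRoot, eval_map_algebraMap])
  have hassoc : Associated (f.eval (n : ℤ)) ((p : ℤ) ^ k * d) := Int.associated_iff.2 hval
  have hfn : ¬ (p : ℤ) ^ (k + 1) ∣ f.eval (n : ℤ) := by
    rw [hassoc.dvd_iff_dvd_right, pow_succ,
      mul_dvd_mul_iff_left (pow_ne_zero _ (by exact_mod_cast hp.ne_zero))]
    exact_mod_cast hpd
  have hunit (a b : ℤ[X]) (hab : f = a * b) (hb : ¬ (p : ℤ) ∣ b.eval (n : ℤ)) : IsUnit b := by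
    have hbf : b.eval (n : ℤ) ∣ (p : ℤ) ^ k * d := by
      rw [← hassoc.dvd_iff_dvd_right, hab, eval_mul]
      exact dvd_mul_left _ _
    have hpb : IsCoprime ((p : ℤ) ^ k) (b.eval (n : ℤ)) :=
      ((Nat.prime_iff_prime_int.1 hp).coprime_iff_not_dvd.2 hb).pow_left
    exact isUnit_of_dvd_of_eval_dvd hprim (Dvd.intro_left a hab.symm) hroots hd (by linarith) hnβ
      (hpb.symm.dvd_of_dvd_mul_left hbf)
  refine ⟨fun hu => by have := natDegree_eq_zero_of_isUnit hu; omega, fun a b hab => ?_⟩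
  have htaylor : taylor (n : ℤ) a * taylor (n : ℤ) b = taylor (n : ℤ) f := by
    rw [← taylor_mul, hab]
  rcases not_dvd_coeff_zero_or_not_dvd_coeff_zero hcop
      (by rwa [htaylor, taylor_coeff_zero])
      (fun i hi => by rw [htaylor, taylor_coeff]; exact hdiv i hi)
      (fun hk => by rw [htaylor, taylor_coeff]; exact hnd hk) with h | h
  · exact Or.inl (hunit b a (by rw [hab, mul_comm]) (by rwa [taylor_coeff_zero] at h))
  · exact Or.inr (hunit a b hab (by rwa [taylor_coeff_zero] at h))

open Polynomial in
theorem stmt_10 (m : ℕ) (f : ℤ[X]) (hdeg : f.natDegree = m) (hprim : f.IsPrimitive)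
    (α β : ℝ) (hα : 0 < α) (hαβ : α < β) (j : ℕ) (hj : j ≤ m)
    (hineq : (|f.coeff j| : ℝ) * α ^ j >
      ((β / α) ^ (m - j)) * ∑ i ∈ (Finset.range (m + 1)).erase j, (|f.coeff i| : ℝ) * α ^ i)
    (n d k ℓ : ℕ) (hn : 0 < n) (hd : 0 < d) (hk : 0 < k) (hℓ : 0 < ℓ)
    (hℓm : ℓ ≤ m) (p : ℕ) (hp : p.Prime) (hpd : ¬ p ∣ d)
    (hnα : (n : ℝ) ≥ α + d) (hnβ : (n : ℝ) ≤ β - d)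
    (hval : f.eval (n : ℤ) = (p : ℤ) ^ k * d ∨ f.eval (n : ℤ) = -((p : ℤ) ^ k * d))
    (hcop : Nat.Coprime k ℓ)
    (hdiv : ∀ i < ℓ, (p : ℤ) ^ k ∣ (Polynomial.hasseDeriv i f).eval (n : ℤ))
    (hnd : 1 < k → ¬ (p : ℤ) ∣ (Polynomial.hasseDeriv ℓ f).eval (n : ℤ)) :
    Irreducible f :=
  stmt_10_general m f hdeg hprim α β hα j hj hineq n d k ℓ hd hℓ hℓm p hp hpd hnα hnβ hval hcop hdiv
    hnd
end
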